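/- arXiv:1005.0298 — 3 statements merged into one kernel-verified Lean document; each statement's English description precedes it below -/
import Mathlib

section
/- Let μ, ω > 0. Suppose u, v : ℝ → ℝ are twice differentiable with u(0) = u'(0) = 0, v(0) = v'(0) = 0, u''(t) = −μ²·u(t) + cos(ωt) for all t, and v''(t) = −ω²·v(t) + cos(μt) for all t. Then u(t) = v(t) for all t ∈ ℝ. (Swap symmetry of zero-data forced oscillators: exchanging the eigenfrequency and the forcing frequency leaves the solution unchanged; this is the single-mode content of the equivalence between the source-identification system and the cascaded homogeneous-wave/oscillator system.) -/
open Real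

section HarmonicOscillator

variable {c : ℝ} {f y z : ℝ → ℝ}

theorem eq_zero_of_deriv_deriv_eq_neg_mul (hc : 0 < c) (hy : Differentiable ℝ y)
    (hy' : Differentiable ℝ (deriv y)) (h0 : y 0 = 0) (h0' : deriv y 0 = 0)
    (hode : ∀ t, deriv (deriv y) t = -c * y t) : y = 0 := by
  -- The energy `(y')² + c y²` is conserved, vanishes at `0`, and dominates `c y²`.
  have henergy : ∀ t, HasDerivAt (fun s ↦ deriv y s ^ 2 + c * y s ^ 2) 0 t := fun t ↦ by
    refine (((hy' t).hasDerivAt.pow 2).add (((hy t).hasDerivAt.pow 2).const_mul c)).congr_deriv ?_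
    rw [hode t]
    ring
  funext t
  have hconst := is_const_of_deriv_eq_zero (fun s ↦ (henergy s).differentiableAt)
    (fun s ↦ (henergy s).deriv) t 0
  simp only [h0, h0'] at hconst
  have hsq : c * y t ^ 2 = 0 := by nlinarith [sq_nonneg (deriv y t), sq_nonneg (y t)]
  simpa [hc.ne'] using hsq

theorem eq_of_deriv_deriv_eq_neg_mul_add (hc : 0 < c) (hy : Differentiable ℝ y)
    (hy' : Differentiable ℝ (deriv y)) (hz : Differentiable ℝ z)
    (hz' : Differentiable ℝ (deriv z)) (h0 : y 0 = z 0) (h0' : deriv y 0 = deriv z 0)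
    (hodey : ∀ t, deriv (deriv y) t = -c * y t + f t)
    (hodez : ∀ t, deriv (deriv z) t = -c * z t + f t) : y = z := by
  have hderiv : deriv (y - z) = deriv y - deriv z := funext fun t ↦ deriv_sub (hy t) (hz t)
  have hderiv2 : deriv (deriv (y - z)) = deriv (deriv y) - deriv (deriv z) := by
    rw [hderiv]
    exact funext fun t ↦ deriv_sub (hy' t) (hz' t)
  refine sub_eq_zero.mp (eq_zero_of_deriv_deriv_eq_neg_mul hc (hy.sub hz) ?_ ?_ ?_ ?_)
  · exact hderiv ▸ hy'.sub hz'
  · simp [h0]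
  · simp [hderiv, h0']
  · intro t
    simp only [hderiv2, Pi.sub_apply, hodey, hodez]
    ring

end HarmonicOscillator

theorem hasDerivAt_cos_mul (a t : ℝ) :
    HasDerivAt (fun s ↦ cos (a * s)) (-a * sin (a * t)) t := by
  simpa [mul_comm] using ((hasDerivAt_id t).const_mul a).cos

theorem hasDerivAt_sin_mul (a t : ℝ) :
    HasDerivAt (fun s ↦ sin (a * s)) (a * cos (a * t)) t := by
  simpa [mul_comm] using ((hasDerivAt_id t).const_mul a).sin

/-- For `μ² ≠ ω²`, the zero-data solution of `y'' = -μ² y + cos (ω t)`; numerator and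
denominator both change sign under `μ ↔ ω`, which is the whole swap symmetry. -/
noncomputable def swapSolution (μ ω : ℝ) (t : ℝ) : ℝ :=
  (cos (ω * t) - cos (μ * t)) / (μ ^ 2 - ω ^ 2)

namespace swapSolution

variable (μ ω : ℝ)

theorem comm : swapSolution ω μ = swapSolution μ ω := by
  funext t
  rw [swapSolution, swapSolution, ← neg_sub, ← neg_sub (μ ^ 2), neg_div_neg_eq]

theorem hasDerivAt (t : ℝ) : HasDerivAt (swapSolution μ ω)
    ((μ * sin (μ * t) - ω * sin (ω * t)) / (μ ^ 2 - ω ^ 2)) t := by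
  refine ((hasDerivAt_cos_mul ω t).sub (hasDerivAt_cos_mul μ t)).div_const _ |>.congr_deriv ?_
  ring

theorem hasDerivAt_deriv (t : ℝ) : HasDerivAt (deriv (swapSolution μ ω))
    ((μ ^ 2 * cos (μ * t) - ω ^ 2 * cos (ω * t)) / (μ ^ 2 - ω ^ 2)) t := by
  rw [show deriv (swapSolution μ ω) = _ from funext fun s ↦ (hasDerivAt μ ω s).deriv]
  refine (((hasDerivAt_sin_mul μ t).const_mul μ).sub
    ((hasDerivAt_sin_mul ω t).const_mul ω)).div_const _ |>.congr_deriv ?_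
  ring

theorem differentiable : Differentiable ℝ (swapSolution μ ω) :=
  fun t ↦ (hasDerivAt μ ω t).differentiableAt

theorem differentiable_deriv : Differentiable ℝ (deriv (swapSolution μ ω)) :=
  fun t ↦ (hasDerivAt_deriv μ ω t).differentiableAt

theorem apply_zero : swapSolution μ ω 0 = 0 := by
  simp [swapSolution]

theorem deriv_zero : deriv (swapSolution μ ω) 0 = 0 := by
  simp [(hasDerivAt μ ω 0).deriv]

theorem deriv_deriv {μ ω : ℝ} (h : μ ^ 2 ≠ ω ^ 2) (t : ℝ) :
    deriv (deriv (swapSolution μ ω)) t = -μ ^ 2 * swapSolution μ ω t + cos (ω * t) := by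
  rw [(hasDerivAt_deriv μ ω t).deriv, swapSolution]
  field_simp [sub_ne_zero.mpr h]
  ring

end swapSolution

theorem eq_swapSolution {μ ω : ℝ} {y : ℝ → ℝ} (hμ : 0 < μ) (h : μ ^ 2 ≠ ω ^ 2)
    (hy : Differentiable ℝ y) (hy' : Differentiable ℝ (deriv y)) (h0 : y 0 = 0)
    (h0' : deriv y 0 = 0) (hode : ∀ t, deriv (deriv y) t = -μ ^ 2 * y t + cos (ω * t)) :
    y = swapSolution μ ω :=
  eq_of_deriv_deriv_eq_neg_mul_add (pow_pos hμ 2) hy hy' (swapSolution.differentiable μ ω)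
    (swapSolution.differentiable_deriv μ ω) (h0.trans (swapSolution.apply_zero μ ω).symm)
    (h0'.trans (swapSolution.deriv_zero μ ω).symm) hode (swapSolution.deriv_deriv h)

/-- Swap symmetry of zero-data forced oscillators: exchanging the eigenfrequency `μ`
and the forcing frequency `ω` leaves the solution with zero initial data unchanged. -/
theorem forced_oscillator_swap_symmetry (μ ω : ℝ) (hμ : 0 < μ) (hω : 0 < ω)
    (u v : ℝ → ℝ)
    (hu1 : ∀ t : ℝ, DifferentiableAt ℝ u t)
    (hu2 : ∀ t : ℝ, DifferentiableAt ℝ (deriv u) t)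
    (hv1 : ∀ t : ℝ, DifferentiableAt ℝ v t)
    (hv2 : ∀ t : ℝ, DifferentiableAt ℝ (deriv v) t)
    (hu0 : u 0 = 0) (hu0' : deriv u 0 = 0)
    (hv0 : v 0 = 0) (hv0' : deriv v 0 = 0)
    (hodeu : ∀ t : ℝ, deriv (deriv u) t = -μ ^ 2 * u t + Real.cos (ω * t))
    (hodev : ∀ t : ℝ, deriv (deriv v) t = -ω ^ 2 * v t + Real.cos (μ * t)) :
    ∀ t : ℝ, u t = v t := by
  rcases eq_or_ne μ ω with rfl | hne
  · exact congrFun <| eq_of_deriv_deriv_eq_neg_mul_add (pow_pos hμ 2) hu1 hu2 hv1 hv2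
      (hu0.trans hv0.symm) (hu0'.trans hv0'.symm) hodeu hodev
  have hsq : μ ^ 2 ≠ ω ^ 2 := fun h ↦ hne ((sq_eq_sq₀ hμ.le hω.le).mp h)
  have hu : u = swapSolution μ ω := eq_swapSolution hμ hsq hu1 hu2 hu0 hu0' hodeu
  have hv : v = swapSolution ω μ := eq_swapSolution hω hsq.symm hv1 hv2 hv0 hv0' hodev
  intro t
  rw [hu, hv, swapSolution.comm]
end

section
/- Let ω > 0 with ω ≠ π and ω ≠ 2π. Then there exist real numbers q₁, q₂ not both zero and twice differentiable functions u₁, u₂ : ℝ → ℝ such that u₁''(t) = −π²·u₁(t) + q₁·cos(ωt) and u₂''(t) = −4π²·u₂(t) + q₂·cos(ωt) for all t, and the output π·u₁(t) + 2π·u₂(t) equals 0 for all t ∈ ℝ. (Non-observability of the six-dimensional two-mode system with unknown initial state and unknown source parameters: a nonzero state–parameter configuration produces identically zero output.) -/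
/-!
Make the two modes cancel: `u₁(t) = cos ωt` and `u₂(t) = -½ cos ωt` give output
`π u₁ + 2π u₂ = 0`, and `c cos ωt` solves `u'' = -k u + c (k - ω²) cos ωt` for every `k`,
so the sources `q₁ = π² - ω²` and `q₂ = -½ (4π² - ω²)` fit. They cannot both vanish, since
that would force `π² = ω² = 4π²`.
-/

open Real

def IsForcedOscillatorSolution (k q ω : ℝ) (u : ℝ → ℝ) : Prop :=
  (∀ t, DifferentiableAt ℝ u t) ∧ (∀ t, DifferentiableAt ℝ (deriv u) t) ∧
    ∀ t, deriv (deriv u) t = -k * u t + q * cos (ω * t)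

theorem hasDerivAt_const_mul_cos_mul (c ω t : ℝ) :
    HasDerivAt (fun s => c * cos (ω * s)) (-(c * ω) * sin (ω * t)) t :=
  (((hasDerivAt_id' t).const_mul ω).cos.const_mul c).congr_deriv (by ring)

theorem hasDerivAt_const_mul_sin_mul (c ω t : ℝ) :
    HasDerivAt (fun s => c * sin (ω * s)) (c * ω * cos (ω * t)) t :=
  (((hasDerivAt_id' t).const_mul ω).sin.const_mul c).congr_deriv (by ring)

theorem deriv_const_mul_cos_mul (c ω : ℝ) :
    deriv (fun s => c * cos (ω * s)) = fun t => -(c * ω) * sin (ω * t) :=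
  funext fun t => (hasDerivAt_const_mul_cos_mul c ω t).deriv

theorem isForcedOscillatorSolution_const_mul_cos_mul (k c ω : ℝ) :
    IsForcedOscillatorSolution k (c * (k - ω ^ 2)) ω fun t => c * cos (ω * t) := by
  refine ⟨fun t => (hasDerivAt_const_mul_cos_mul c ω t).differentiableAt, fun t => ?_,
    fun t => ?_⟩
  · rw [deriv_const_mul_cos_mul]
    exact (hasDerivAt_const_mul_sin_mul _ ω t).differentiableAt
  · rw [deriv_const_mul_cos_mul, (hasDerivAt_const_mul_sin_mul _ ω t).deriv]
    ring

theorem two_mode_system_not_observable_general (ω : ℝ) :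
    ∃ (q₁ q₂ : ℝ) (u₁ u₂ : ℝ → ℝ),
      (q₁ ≠ 0 ∨ q₂ ≠ 0)
      ∧ (∀ t : ℝ, DifferentiableAt ℝ u₁ t)
      ∧ (∀ t : ℝ, DifferentiableAt ℝ (deriv u₁) t)
      ∧ (∀ t : ℝ, DifferentiableAt ℝ u₂ t)
      ∧ (∀ t : ℝ, DifferentiableAt ℝ (deriv u₂) t)
      ∧ (∀ t : ℝ, deriv (deriv u₁) t = -π ^ 2 * u₁ t + q₁ * Real.cos (ω * t))
      ∧ (∀ t : ℝ, deriv (deriv u₂) t = -(4 * π ^ 2) * u₂ t + q₂ * Real.cos (ω * t))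
      ∧ (∀ t : ℝ, π * u₁ t + 2 * π * u₂ t = 0) := by
  obtain ⟨hu₁, hu₁', hu₁''⟩ := isForcedOscillatorSolution_const_mul_cos_mul (π ^ 2) 1 ω
  obtain ⟨hu₂, hu₂', hu₂''⟩ :=
    isForcedOscillatorSolution_const_mul_cos_mul (4 * π ^ 2) (-1 / 2) ω
  have hq : 1 * (π ^ 2 - ω ^ 2) ≠ 0 ∨ -1 / 2 * (4 * π ^ 2 - ω ^ 2) ≠ 0 := by
    by_contra! h
    nlinarith [pi_pos]
  exact ⟨_, _, _, _, hq, hu₁, hu₁', hu₂, hu₂', hu₁'', hu₂'', fun t => by ring⟩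

/-- Non-observability of the two-mode system with unknown initial state and unknown
source parameters: some nonzero state–parameter configuration produces identically
zero output `π u₁(t) + 2π u₂(t)`. -/
theorem two_mode_system_not_observable (ω : ℝ) (hω : 0 < ω) (hω1 : ω ≠ π)
    (hω2 : ω ≠ 2 * π) :
    ∃ (q₁ q₂ : ℝ) (u₁ u₂ : ℝ → ℝ),
      (q₁ ≠ 0 ∨ q₂ ≠ 0)
      ∧ (∀ t : ℝ, DifferentiableAt ℝ u₁ t)
      ∧ (∀ t : ℝ, DifferentiableAt ℝ (deriv u₁) t)
      ∧ (∀ t : ℝ, DifferentiableAt ℝ u₂ t)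
      ∧ (∀ t : ℝ, DifferentiableAt ℝ (deriv u₂) t)
      ∧ (∀ t : ℝ, deriv (deriv u₁) t = -π ^ 2 * u₁ t + q₁ * Real.cos (ω * t))
      ∧ (∀ t : ℝ, deriv (deriv u₂) t = -(4 * π ^ 2) * u₂ t + q₂ * Real.cos (ω * t))
      ∧ (∀ t : ℝ, π * u₁ t + 2 * π * u₂ t = 0) :=
  two_mode_system_not_observable_general ω
end

section
/- Let ω > 0 with ω ≠ π and ω ≠ 2π, let T > 0 and q₁, q₂ ∈ ℝ. Suppose u₁, u₂ : ℝ → ℝ are twice differentiable with u₁(0) = u₁'(0) = u₂(0) = u₂'(0) = 0, u₁''(t) = −π²·u₁(t) + q₁·cos(ωt) and u₂''(t) = −4π²·u₂(t) + q₂·cos(ωt) for all t, and that π·u₁(t) + 2π·u₂(t) = 0 for all t ∈ [0,T]. Then q₁ = 0 and q₂ = 0. (With known zero initial state, the two source parameters of the two-mode system are identifiable from the output.) -/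
/-!
On `(0, T)` the output constraint reads `u₁ = -2 u₂`, so `u₁'' = -2 u₂''` there, and the two
mode equations combine to `6π² u₂(t) = (q₁ + 2q₂) cos ωt`. Letting `t → 0⁺` with `u₂(0) = 0`
gives `q₁ + 2q₂ = 0`, hence `u₂ ≡ 0` on `(0, T)`; then the second mode equation leaves
`q₂ cos ωt = 0` there, and `t → 0⁺` again gives `q₂ = 0`.
-/

open Real Filter Set Topology

theorem eq_of_eqOn_Ioo_of_continuousWithinAt {Y : Type*} [TopologicalSpace Y] [T2Space Y]
    {u f : ℝ → Y} {a b : ℝ} (hab : a < b) (hu : ContinuousWithinAt u (Ioi a) a)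
    (hf : ContinuousWithinAt f (Ioi a) a) (h : EqOn u f (Ioo a b)) : u a = f a :=
  tendsto_nhds_unique_of_eventuallyEq hu hf (eventuallyEq_of_mem (Ioo_mem_nhdsGT hab) h)

theorem Set.EqOn.deriv_deriv {𝕜 F : Type*} [NontriviallyNormedField 𝕜] [NormedAddCommGroup F]
    [NormedSpace 𝕜 F] {f g : 𝕜 → F} {s : Set 𝕜} (hfg : EqOn f g s) (hs : IsOpen s) :
    EqOn (_root_.deriv (_root_.deriv f)) (_root_.deriv (_root_.deriv g)) s :=
  (hfg.deriv hs).deriv hs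

theorem eqOn_forcing_of_eqOn_const_mul {u₁ u₂ g : ℝ → ℝ} {s : Set ℝ} (hs : IsOpen s)
    {a k₁ k₂ q₁ q₂ : ℝ} (hprop : EqOn u₁ (fun t ↦ a * u₂ t) s)
    (hode₁ : ∀ t ∈ s, deriv (deriv u₁) t = -k₁ * u₁ t + q₁ * g t)
    (hode₂ : ∀ t ∈ s, deriv (deriv u₂) t = -k₂ * u₂ t + q₂ * g t) :
    EqOn (fun t ↦ a * (k₂ - k₁) * u₂ t) (fun t ↦ (a * q₂ - q₁) * g t) s := by
  intro t ht
  have hdd : deriv (deriv u₁) t = a * deriv (deriv u₂) t := by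
    rw [hprop.deriv_deriv hs ht, deriv_const_mul_field', deriv_const_mul_field]
  have hu₁ : u₁ t = a * u₂ t := hprop ht
  simp only
  linear_combination -(hdd.symm.trans (hode₁ t ht)) + a * hode₂ t ht + k₁ * hu₁

theorem two_mode_system_identifiable_general (ω : ℝ) (T : ℝ) (hT : 0 < T) (q₁ q₂ : ℝ) (u₁ u₂ : ℝ → ℝ)
    (hu₂1 : ∀ t : ℝ, DifferentiableAt ℝ u₂ t)
    (h₂0 : u₂ 0 = 0)
    (hode₁ : ∀ t : ℝ, deriv (deriv u₁) t = -π ^ 2 * u₁ t + q₁ * Real.cos (ω * t))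
    (hode₂ : ∀ t : ℝ, deriv (deriv u₂) t = -(4 * π ^ 2) * u₂ t + q₂ * Real.cos (ω * t))
    (hout : ∀ t ∈ Set.Icc (0:ℝ) T, π * u₁ t + 2 * π * u₂ t = 0) :
    q₁ = 0 ∧ q₂ = 0 := by
  have hcos : Continuous fun t ↦ cos (ω * t) := by fun_prop
  have hu₂ : ContinuousWithinAt u₂ (Ioi 0) 0 := (hu₂1 0).continuousAt.continuousWithinAt
  have hprop : EqOn u₁ (fun t ↦ -2 * u₂ t) (Ioo 0 T) := fun t ht ↦ by
    have hπ : π * (u₁ t + 2 * u₂ t) = 0 := by linear_combination hout t (Ioo_subset_Icc_self ht)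
    linear_combination (mul_eq_zero.mp hπ).resolve_left pi_ne_zero
  have hrel := eqOn_forcing_of_eqOn_const_mul isOpen_Ioo hprop (fun t _ ↦ hode₁ t)
    (fun t _ ↦ hode₂ t)
  have hsum : q₁ + 2 * q₂ = 0 := by
    have := eq_of_eqOn_Ioo_of_continuousWithinAt hT (hu₂.const_mul _)
      (hcos.continuousWithinAt.const_mul _) hrel
    simp only [h₂0, mul_zero, cos_zero, mul_one] at this
    linarith
  have hu₂_zero : EqOn u₂ (fun _ ↦ 0) (Ioo 0 T) := fun t ht ↦ by
    have : 6 * π ^ 2 * u₂ t = 0 := by linear_combination -hrel ht + cos (ω * t) * hsum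
    exact (mul_eq_zero.mp this).resolve_left (by positivity)
  have hq₂ : q₂ = 0 := by
    have hforce : EqOn (fun t ↦ q₂ * cos (ω * t)) (fun _ ↦ 0) (Ioo 0 T) := fun t ht ↦ by
      have := hode₂ t
      rw [hu₂_zero.deriv_deriv isOpen_Ioo ht, hu₂_zero ht] at this
      simp only [deriv_const', mul_zero, zero_add] at this ⊢
      exact this.symm
    simpa using eq_of_eqOn_Ioo_of_continuousWithinAt hT
      (hcos.continuousWithinAt.const_mul q₂) continuousWithinAt_const hforce
  exact ⟨by linarith, hq₂⟩

/-- Identifiability of the two source parameters of the two-mode system from the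
output, given known zero initial state. -/
theorem two_mode_system_identifiable (ω : ℝ) (hω : 0 < ω) (hω1 : ω ≠ π)
    (hω2 : ω ≠ 2 * π) (T : ℝ) (hT : 0 < T) (q₁ q₂ : ℝ) (u₁ u₂ : ℝ → ℝ)
    (hu₁1 : ∀ t : ℝ, DifferentiableAt ℝ u₁ t)
    (hu₁2 : ∀ t : ℝ, DifferentiableAt ℝ (deriv u₁) t)
    (hu₂1 : ∀ t : ℝ, DifferentiableAt ℝ u₂ t)
    (hu₂2 : ∀ t : ℝ, DifferentiableAt ℝ (deriv u₂) t)
    (h₁0 : u₁ 0 = 0) (h₁0' : deriv u₁ 0 = 0)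
    (h₂0 : u₂ 0 = 0) (h₂0' : deriv u₂ 0 = 0)
    (hode₁ : ∀ t : ℝ, deriv (deriv u₁) t = -π ^ 2 * u₁ t + q₁ * Real.cos (ω * t))
    (hode₂ : ∀ t : ℝ, deriv (deriv u₂) t = -(4 * π ^ 2) * u₂ t + q₂ * Real.cos (ω * t))
    (hout : ∀ t ∈ Set.Icc (0:ℝ) T, π * u₁ t + 2 * π * u₂ t = 0) :
    q₁ = 0 ∧ q₂ = 0 :=
  two_mode_system_identifiable_general ω T hT q₁ q₂ u₁ u₂ hu₂1 h₂0 hode₁ hode₂ hout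
end
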